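/- arXiv:2306.05214 — 3 statements merged into one kernel-verified Lean document; each statement's English description precedes it below -/
import Mathlib

section
/- Every composant of an indecomposable continuum X is a meager subset of X. -/
/-!
A proper subcontinuum `C` of an indecomposable continuum `X` has empty interior: otherwise
either `Cᶜ` is connected and `X = C ∪ closure Cᶜ`, or open sets `u`, `v` separate `Cᶜ` and
`X = (C ∪ u) ∪ (C ∪ v)`, each time a union of two proper subcontinua.
For a countable basis `(U_n)`, the closure of the component of `Uₙᶜ` containing `p` is thus
nowhere dense, and each proper subcontinuum through `p` lies in one of them: take `Uₙ`
inside its complement.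
-/

open Set TopologicalSpace

/-- A piece of `C ∪ A` split off from `C` lies in `A`, hence is clopen in the whole space. -/
theorem IsPreconnected.union_of_isOpen_of_isClosed {X : Type*} [TopologicalSpace X]
    [PreconnectedSpace X] {C A : Set X} (hC : IsPreconnected C) (hA : IsOpen A)
    (hCA : IsClosed (C ∪ A)) : IsPreconnected (C ∪ A) := by
  rw [isPreconnected_iff_subset_of_fully_disjoint_closed hCA]
  have key : ∀ t₁ t₂ : Set X, IsClosed t₁ → IsClosed t₂ → C ∪ A ⊆ t₁ ∪ t₂ → Disjoint t₁ t₂ →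
      C ⊆ t₁ → C ∪ A ⊆ t₁ ∨ C ∪ A ⊆ t₂ := by
    intro t₁ t₂ ht₁ ht₂ hcover hdisj hCt₁
    have hsplit : (C ∪ A) ∩ t₂ = A ∩ t₁ᶜ := by
      ext x
      have hx : x ∈ C ∨ x ∈ A → x ∈ t₁ ∨ x ∈ t₂ := fun h => hcover h
      have := @hCt₁ x
      have := hdisj.notMem_of_mem_left (a := x)
      simp only [mem_inter_iff, mem_union, mem_compl_iff]
      tauto
    have hclopen : IsClopen ((C ∪ A) ∩ t₂) :=
      ⟨hCA.inter ht₂, hsplit ▸ hA.inter ht₁.isOpen_compl⟩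
    rcases isClopen_iff.mp hclopen with hempty | huniv
    · left
      intro x hx
      refine (hcover hx).resolve_right fun hx₂ => ?_
      exact eq_empty_iff_forall_notMem.1 hempty x ⟨hx, hx₂⟩
    · exact Or.inr fun x _ => (eq_univ_iff_forall.1 huniv x).2
  intro t₁ t₂ ht₁ ht₂ hcover hdisj
  have hCcover : C ⊆ t₁ ∪ t₂ := subset_union_left.trans hcover
  rcases (isPreconnected_iff_subset_of_disjoint_closed.mp hC) t₁ t₂ ht₁ ht₂ hCcover
      (by rw [hdisj.inter_eq, inter_empty]) with hCt | hCt
  · exact key t₁ t₂ ht₁ ht₂ hcover hdisj hCt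
  · exact (key t₂ t₁ ht₂ ht₁ (union_comm t₁ t₂ ▸ hcover) hdisj.symm hCt).symm

theorem interior_eq_empty_of_indecomposable {X : Type*} [TopologicalSpace X] [CompactSpace X]
    [PreconnectedSpace X]
    (hind : ∀ C D : Set X, IsCompact C → IsConnected C → C ≠ Set.univ →
      IsCompact D → IsConnected D → D ≠ Set.univ → C ∪ D ≠ Set.univ)
    {C : Set X} (hC : IsClosed C) (hCconn : IsPreconnected C) (hCne : C ≠ univ) :
    interior C = ∅ := by
  rcases C.eq_empty_or_nonempty with rfl | hCnonempty
  · exact interior_empty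
  by_contra hint
  by_cases hcompl : IsPreconnected Cᶜ
  · refine hind C (closure Cᶜ) hC.isCompact ⟨hCnonempty, hCconn⟩ hCne isClosed_closure.isCompact
      ⟨(nonempty_compl.2 hCne).closure, hcompl.closure⟩ ?_ ?_
    · rw [closure_compl]
      exact compl_ne_univ.2 (nonempty_iff_ne_empty.2 hint)
    · exact univ_subset_iff.1 (union_compl_self C ▸ union_subset_union_right C subset_closure)
  have hpiece : ∀ u v : Set X, IsOpen u → IsOpen v → Cᶜ ⊆ u ∪ v → Cᶜ ∩ (u ∩ v) = ∅ →
      (Cᶜ ∩ v).Nonempty → IsCompact (C ∪ u) ∧ IsConnected (C ∪ u) ∧ C ∪ u ≠ univ := by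
    intro u v hu hv hcover huv hv_ne
    have hcompl_eq : (C ∪ u)ᶜ = Cᶜ ∩ v := by
      ext y
      have hy : y ∉ C → y ∈ u ∨ y ∈ v := fun h => hcover h
      have hy' : y ∉ C → y ∈ u → y ∉ v := fun hyC hyu hyv =>
        eq_empty_iff_forall_notMem.1 huv y ⟨hyC, hyu, hyv⟩
      simp only [mem_compl_iff, mem_union, mem_inter_iff]
      tauto
    have hclosed : IsClosed (C ∪ u) := by
      rw [← isOpen_compl_iff, hcompl_eq]
      exact hC.isOpen_compl.inter hv
    exact ⟨hclosed.isCompact, ⟨hCnonempty.mono subset_union_left,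
      hCconn.union_of_isOpen_of_isClosed hu hclosed⟩, nonempty_compl.1 (hcompl_eq.symm ▸ hv_ne)⟩
  simp only [IsPreconnected, not_forall, not_nonempty_iff_eq_empty] at hcompl
  obtain ⟨u, v, hu, hv, hcover, hu_ne, hv_ne, huv⟩ := hcompl
  obtain ⟨hCu, hCu_conn, hCu_ne⟩ := hpiece u v hu hv hcover huv hv_ne
  obtain ⟨hCv, hCv_conn, hCv_ne⟩ := hpiece v u hv hu (union_comm u v ▸ hcover)
    (inter_comm u v ▸ huv) hu_ne
  refine hind _ _ hCu hCu_conn hCu_ne hCv hCv_conn hCv_ne (univ_subset_iff.1 ?_)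
  rw [← union_compl_self C]
  exact union_subset (subset_union_left.trans subset_union_left)
    (hcover.trans (union_subset_union subset_union_right subset_union_right))

theorem isNowhereDense_closure_connectedComponentIn_compl_of_indecomposable {X : Type*}
    [TopologicalSpace X] [CompactSpace X] [PreconnectedSpace X]
    (hind : ∀ C D : Set X, IsCompact C → IsConnected C → C ≠ Set.univ →
      IsCompact D → IsConnected D → D ≠ Set.univ → C ∪ D ≠ Set.univ)
    {U : Set X} (hU : IsOpen U) (hUne : U.Nonempty) (p : X) :
    IsNowhereDense (closure (connectedComponentIn Uᶜ p)) := by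
  have hsub : closure (connectedComponentIn Uᶜ p) ⊆ Uᶜ :=
    closure_minimal (connectedComponentIn_subset _ _) hU.isClosed_compl
  obtain ⟨x, hx⟩ := hUne
  exact isClosed_closure.isNowhereDense_iff.2 <|
    interior_eq_empty_of_indecomposable hind isClosed_closure
      isPreconnected_connectedComponentIn.closure fun h => hsub (h.symm ▸ mem_univ x) hx

theorem composant_of_indecomposable_meager_general (X : Type*) [MetricSpace X] [CompactSpace X]
    [ConnectedSpace X]
    (hind : ∀ C D : Set X, IsCompact C → IsConnected C → C ≠ Set.univ →
      IsCompact D → IsConnected D → D ≠ Set.univ → C ∪ D ≠ Set.univ)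
    (p : X) :
    IsMeagre {q : X | ∃ C : Set X, IsCompact C ∧ IsConnected C ∧ C ≠ Set.univ ∧
      p ∈ C ∧ q ∈ C} := by
  have hB := isBasis_countableBasis X
  refine (isMeagre_biUnion (countable_countableBasis X) fun U hU =>
    (isNowhereDense_closure_connectedComponentIn_compl_of_indecomposable hind (hB.isOpen hU)
      (nonempty_iff_ne_empty.2 (ne_of_mem_of_not_mem hU (empty_notMem_countableBasis X)))
      p).isMeagre).mono ?_
  rintro q ⟨C, hC, hCconn, hCne, hpC, hqC⟩
  obtain ⟨U, hU, -, hUC⟩ :=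
    hB.exists_nonempty_subset (nonempty_compl.2 hCne) hC.isClosed.isOpen_compl
  have hCU : C ⊆ Uᶜ := subset_compl_comm.1 hUC
  exact mem_biUnion hU
    (subset_closure (hCconn.isPreconnected.subset_connectedComponentIn hpC hCU hqC))

/-- Every composant of an indecomposable continuum is a meager subset. -/
theorem composant_of_indecomposable_meager (X : Type*) [MetricSpace X] [CompactSpace X]
    [ConnectedSpace X] [Nonempty X]
    (hind : ∀ C D : Set X, IsCompact C → IsConnected C → C ≠ Set.univ →
      IsCompact D → IsConnected D → D ≠ Set.univ → C ∪ D ≠ Set.univ)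
    (p : X) :
    IsMeagre {q : X | ∃ C : Set X, IsCompact C ∧ IsConnected C ∧ C ≠ Set.univ ∧
      p ∈ C ∧ q ∈ C} :=
  composant_of_indecomposable_meager_general X hind p
end

section
/- For any positive integer N and positive integer k, the cyclic subgroup of the torus (ℝ/ℤ)^k generated by the element x = (1/N, 1/N², …, 1/N^k) meets every cube of the 1/N-grid; in particular, it is a (√k/N)-net in (ℝ/ℤ)^k with the Euclidean (or sup) metric. -/
/-!
Write `m = j₀ + j₁ N + ⋯ + j_{k-1} N^(k-1)` in base `N`. Modulo `1`, the number `m / N^(i+1)` only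
sees the digits `j₀, …, jᵢ`, so it equals `(j₀ + ⋯ + jᵢ Nⁱ) / N^(i+1)`; as the digits below `jᵢ`
contribute less than `Nⁱ`, this lies in `[jᵢ / N, (jᵢ + 1) / N]`. Hence `m • x` lies in the grid
cube with corner `j / N`; choosing `j` to be the cube containing a given point gives the net bound.
-/

open Finset Set

namespace Nat

theorem sum_range_mul_pow_lt {N n : ℕ} {d : ℕ → ℕ} (hd : ∀ l < n, d l < N) :
    ∑ l ∈ range n, d l * N ^ l < N ^ n := by
  induction n with
  | zero => simp
  | succ n ih =>
    have hlow := ih fun l hl => hd l (by omega)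
    have htop : d n + 1 ≤ N := hd n (by omega)
    calc ∑ l ∈ range (n + 1), d l * N ^ l
        < (d n + 1) * N ^ n := by rw [sum_range_succ]; linarith
      _ ≤ N ^ (n + 1) := by rw [pow_succ, mul_comm (N ^ n)]; exact Nat.mul_le_mul_right _ htop

theorem sum_range_mul_pow_modEq {N i k : ℕ} (d : ℕ → ℕ) (hik : i ≤ k) :
    ∑ l ∈ range i, d l * N ^ l ≡ ∑ l ∈ range k, d l * N ^ l [MOD N ^ i] := by
  rw [← sum_range_add_sum_Ico _ hik]
  have hdvd : N ^ i ∣ ∑ l ∈ Ico i k, d l * N ^ l :=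
    dvd_sum fun l hl => dvd_mul_of_dvd_right (pow_dvd_pow N (mem_Ico.1 hl).1) _
  simpa using ((Nat.modEq_zero_iff_dvd.2 hdvd).add_left (∑ l ∈ range i, d l * N ^ l)).symm

end Nat

theorem AddCircle.zsmul_coe_one_div_eq_of_modEq {a s m : ℕ} (ha : a ≠ 0) (h : s ≡ m [MOD a]) :
    (m : ℤ) • ((1 / a : ℝ) : AddCircle (1 : ℝ)) = ((s / a : ℝ) : AddCircle (1 : ℝ)) := by
  obtain ⟨c, hc⟩ := Nat.modEq_iff_dvd.1 h
  rw [← QuotientAddGroup.mk_zsmul, QuotientAddGroup.eq_iff_sub_mem,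
    AddSubgroup.mem_zmultiples_iff]
  refine ⟨c, ?_⟩
  have hc' : (m : ℝ) - s = a * c := by exact_mod_cast hc
  simp only [zsmul_eq_mul, Int.cast_natCast, mul_one]
  field_simp
  linarith

theorem AddCircle.exists_lt_forall_mem_Icc_dist_le {N : ℕ} (hN : 0 < N) (y : AddCircle (1 : ℝ)) :
    ∃ j < N, ∀ t ∈ Icc ((j : ℝ) / N) ((j + 1) / N), dist y t ≤ 1 / N := by
  obtain ⟨x, rfl⟩ := QuotientAddGroup.mk_surjective y
  have hNR : (0 : ℝ) < N := by exact_mod_cast hN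
  set a := Int.fract x
  have ha : 0 ≤ a * N := mul_nonneg (Int.fract_nonneg x) hNR.le
  refine ⟨⌊a * N⌋₊, (Nat.floor_lt ha).2 ?_, fun t ⟨ht₁, ht₂⟩ => ?_⟩
  · nlinarith [Int.fract_lt_one x]
  have ha₁ := Nat.floor_le ha
  have ha₂ := Nat.lt_floor_add_one (a * N)
  rw [div_le_iff₀ hNR] at ht₁
  rw [le_div_iff₀ hNR] at ht₂
  calc dist (x : AddCircle (1 : ℝ)) t
      = ‖((a - t : ℝ) : AddCircle (1 : ℝ))‖ := by
        rw [← AddCircle.coe_fract x, dist_eq_norm, QuotientAddGroup.mk_sub]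
    _ ≤ |a - t| := QuotientAddGroup.norm_mk_le_norm
    _ ≤ 1 / N := by
        rw [abs_sub_le_iff, le_div_iff₀ hNR, le_div_iff₀ hNR]
        constructor <;> linarith

theorem zsmul_coe_sum_digits_mem_Icc {N k i : ℕ} (hN : 0 < N) {d : ℕ → ℕ}
    (hd : ∀ l < i, d l < N) (hik : i < k) :
    ∃ t ∈ Icc ((d i : ℝ) / N) ((d i + 1) / N),
      ((∑ l ∈ range k, d l * N ^ l : ℕ) : ℤ) • ((1 / N ^ (i + 1) : ℝ) : AddCircle (1 : ℝ)) = t := by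
  set S := ∑ l ∈ range (i + 1), d l * N ^ l with hS
  have hlow := Nat.sum_range_mul_pow_lt hd
  have hS_ge : d i * N ^ (i + 1) ≤ S * N := by
    rw [pow_succ, ← mul_assoc]
    exact Nat.mul_le_mul_right N (by rw [hS, sum_range_succ]; omega)
  have hS_le : S * N ≤ (d i + 1) * N ^ (i + 1) := by
    rw [pow_succ, ← mul_assoc]
    exact Nat.mul_le_mul_right N (by rw [hS, sum_range_succ]; linarith)
  have hNR : (0 : ℝ) < N := by exact_mod_cast hN
  refine ⟨S / N ^ (i + 1), ⟨?_, ?_⟩, ?_⟩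
  · rw [div_le_div_iff₀ hNR (by positivity)]
    exact_mod_cast hS_ge
  · rw [div_le_div_iff₀ (by positivity) hNR]
    exact_mod_cast hS_le
  · have := AddCircle.zsmul_coe_one_div_eq_of_modEq (pow_ne_zero (i + 1) hN.ne')
      (Nat.sum_range_mul_pow_modEq d hik)
    simpa only [Nat.cast_pow] using this

theorem exists_zsmul_mem_gridCube {k N : ℕ} (hN : 0 < N) {j : Fin k → ℕ} (hj : ∀ i, j i < N) :
    ∃ m : ℤ, ∀ i : Fin k, ∃ t ∈ Icc ((j i : ℝ) / N) ((j i + 1) / N),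
      m • ((1 / N ^ ((i : ℕ) + 1) : ℝ) : AddCircle (1 : ℝ)) = t := by
  let d : ℕ → ℕ := fun l => if h : l < k then j ⟨l, h⟩ else 0
  refine ⟨(∑ l ∈ range k, d l * N ^ l : ℕ), fun i => ?_⟩
  have hd : ∀ l < (i : ℕ), d l < N := fun l hl => by
    simp only [d, dif_pos (hl.trans i.isLt)]
    exact hj _
  simpa [d] using zsmul_coe_sum_digits_mem_Icc hN hd i.isLt

theorem cyclic_net_in_torus_general (k N : ℕ) (hN : 0 < N) :
    (∀ j : Fin k → ℕ, (∀ i, j i < N) →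
      ∃ m : ℤ, ∀ i : Fin k, ∃ t : ℝ,
        (j i : ℝ) / N ≤ t ∧ t ≤ ((j i : ℝ) + 1) / N ∧
        m • ((((1 : ℝ) / N ^ ((i : ℕ) + 1)) : ℝ) : AddCircle (1 : ℝ)) = (t : AddCircle (1 : ℝ))) ∧
    (∀ y : Fin k → AddCircle (1 : ℝ), ∃ m : ℤ,
      dist y (fun i => m • ((((1 : ℝ) / N ^ ((i : ℕ) + 1)) : ℝ) : AddCircle (1 : ℝ)))
        ≤ Real.sqrt k / N) := by
  refine ⟨fun j hj => ?_, fun y => ?_⟩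
  · obtain ⟨m, hm⟩ := exists_zsmul_mem_gridCube hN hj
    exact ⟨m, fun i => let ⟨t, ⟨ht₁, ht₂⟩, ht⟩ := hm i; ⟨t, ht₁, ht₂, ht⟩⟩
  choose j hjN hj using fun i => AddCircle.exists_lt_forall_mem_Icc_dist_le hN (y i)
  obtain ⟨m, hm⟩ := exists_zsmul_mem_gridCube hN hjN
  refine ⟨m, (dist_pi_le_iff (by positivity)).2 fun i => ?_⟩
  obtain ⟨t, ht, hmt⟩ := hm i
  have hk : (1 : ℝ) ≤ Real.sqrt k := Real.one_le_sqrt.2 (by exact_mod_cast i.pos)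
  calc dist (y i) (m • ((1 / N ^ ((i : ℕ) + 1) : ℝ) : AddCircle (1 : ℝ)))
      ≤ 1 / N := hmt ▸ hj i t ht
    _ ≤ Real.sqrt k / N := by gcongr

/-- The cyclic subgroup of `(ℝ/ℤ)^k` generated by `x = (1/N, 1/N², …, 1/N^k)` meets every
cube of the `1/N`-grid; in particular it is a `√k/N`-net for the sup metric. -/
theorem cyclic_net_in_torus (k N : ℕ) (hk : 0 < k) (hN : 0 < N) :
    (∀ j : Fin k → ℕ, (∀ i, j i < N) →
      ∃ m : ℤ, ∀ i : Fin k, ∃ t : ℝ,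
        (j i : ℝ) / N ≤ t ∧ t ≤ ((j i : ℝ) + 1) / N ∧
        m • ((((1 : ℝ) / N ^ ((i : ℕ) + 1)) : ℝ) : AddCircle (1 : ℝ)) = (t : AddCircle (1 : ℝ))) ∧
    (∀ y : Fin k → AddCircle (1 : ℝ), ∃ m : ℤ,
      dist y (fun i => m • ((((1 : ℝ) / N ^ ((i : ℕ) + 1)) : ℝ) : AddCircle (1 : ℝ)))
        ≤ Real.sqrt k / N) :=
  cyclic_net_in_torus_general k N hN
end

section
/- For every δ > 0, the torus (ℝ/ℤ)^k contains a closed subgroup isomorphic as a topological group to the circle ℝ/ℤ that is a δ-net in (ℝ/ℤ)^k. -/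
/-!
The circle winds along `t ↦ (t, N t, …, N^(k-1) t)`. Points on this curve approximating `y` are
found coordinate by coordinate from the last one: if `s` approximates the tail `(y 1, …, y (k-1))`
along the shorter curve, the `N`-th roots of `s` are spaced `1 / N` apart, so one of them, `t`, is
within `1 / (2N)` of `y 0`, and `t` approximates `y`. Being compact, the injective curve is a
topological isomorphism onto its closed image.
-/

namespace AddCircle

theorem dist_coe_le_abs_sub {p : ℝ} (a b : ℝ) :
    dist (a : AddCircle p) (b : AddCircle p) ≤ |a - b| := by
  rw [dist_eq_norm, ← coe_sub, ← Real.norm_eq_abs]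
  exact QuotientAddGroup.norm_mk_le_norm

variable {p : ℝ} [Fact (0 < p)]

theorem exists_nsmul_eq_dist_le {N : ℕ} (hN : 0 < N) (s y : AddCircle p) :
    ∃ t : AddCircle p, N • t = s ∧ dist t y ≤ p / (2 * N) := by
  induction s using QuotientAddGroup.induction_on with | H a => ?_
  induction y using QuotientAddGroup.induction_on with | H b => ?_
  have hN' : (0 : ℝ) < N := by exact_mod_cast hN
  have hp : 0 < p := Fact.out
  -- `(a + m * p) / N` is an `N`-th root of `a` for every integer `m`; take the one nearest `b`
  set m := round ((N * b - a) / p)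
  refine ⟨((a + m * p) / N : ℝ), ?_, ?_⟩
  · rw [← coe_nsmul, nsmul_eq_mul, mul_div_cancel₀ _ hN'.ne', coe_add]
    simp [coe_period]
  · refine (dist_coe_le_abs_sub _ _).trans ?_
    have hround := abs_sub_round ((N * b - a) / p)
    have : (a + m * p) / N - b = - (p / N) * ((N * b - a) / p - m) := by
      field_simp; ring
    rw [this, abs_mul, abs_neg, abs_of_pos (by positivity)]
    calc p / N * |(N * b - a) / p - m| ≤ p / N * (1 / 2) := by gcongr
      _ = p / (2 * N) := by ring

theorem exists_forall_pow_nsmul_dist_le {N : ℕ} (hN : 0 < N) {k : ℕ} (y : Fin k → AddCircle p) :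
    ∃ t : AddCircle p, ∀ i : Fin k, dist ((N ^ (i : ℕ)) • t) (y i) ≤ p / (2 * N) := by
  induction k with
  | zero => exact ⟨0, fun i => i.elim0⟩
  | succ k ih =>
    obtain ⟨s, hs⟩ := ih (Fin.tail y)
    obtain ⟨t, rfl, ht⟩ := exists_nsmul_eq_dist_le hN s (y 0)
    refine ⟨t, Fin.cases (by simpa using ht) fun i => ?_⟩
    simpa [pow_succ', mul_nsmul, Fin.tail] using hs i

end AddCircle

theorem Continuous.exists_continuous_addEquiv_range {G H : Type*} [AddGroup G] [AddGroup H]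
    [TopologicalSpace G] [TopologicalSpace H] [CompactSpace G] [T2Space H]
    {f : G →+ H} (hf : Continuous f) (hinj : Function.Injective f) :
    ∃ e : G ≃+ f.range, Continuous e ∧ Continuous e.symm := by
  have he : Continuous (AddMonoidHom.ofInjective hinj) := continuous_induced_rng.2 hf
  exact ⟨_, he,
    (Continuous.homeoOfEquivCompactToT2 (f := (AddMonoidHom.ofInjective hinj).toEquiv) he).symm.continuous⟩

/-- For every `δ > 0`, the torus `(ℝ/ℤ)^k` contains a closed subgroup topologically
isomorphic to the circle `ℝ/ℤ` which is a `δ`-net. -/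
theorem circle_subgroup_net (k : ℕ) (hk : 0 < k) (δ : ℝ) (hδ : 0 < δ) :
    ∃ H : AddSubgroup (Fin k → AddCircle (1 : ℝ)),
      IsClosed (H : Set (Fin k → AddCircle (1 : ℝ))) ∧
      (∃ e : AddCircle (1 : ℝ) ≃+ H, Continuous e ∧ Continuous e.symm) ∧
      (∀ y : Fin k → AddCircle (1 : ℝ), ∃ h ∈ H, dist y h ≤ δ) := by
  have : Fact ((0 : ℝ) < 1) := ⟨one_pos⟩
  obtain ⟨n, hn⟩ := exists_nat_one_div_lt hδ
  set f : AddCircle (1 : ℝ) →+ (Fin k → AddCircle (1 : ℝ)) :=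
    AddMonoidHom.pi fun i => nsmulAddMonoidHom ((n + 1) ^ (i : ℕ))
  have hf : Continuous f := continuous_pi fun i => continuous_nsmul _
  have hinj : Function.Injective f := fun a b h => by simpa [f] using congrFun h ⟨0, hk⟩
  refine ⟨f.range, ?_, hf.exists_continuous_addEquiv_range hinj, fun y => ?_⟩
  · rw [f.coe_range]
    exact (isCompact_range hf).isClosed
  obtain ⟨t, ht⟩ := AddCircle.exists_forall_pow_nsmul_dist_le n.succ_pos y
  refine ⟨f t, ⟨t, rfl⟩, (dist_pi_le_iff hδ.le).2 fun i => ?_⟩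
  calc dist (y i) (f t i) ≤ 1 / (2 * (n + 1 : ℕ)) := by rw [dist_comm]; exact ht i
    _ ≤ 1 / (n + 1) := by push_cast; gcongr; linarith
    _ ≤ δ := hn.le
end
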